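/- Let $R = k[X_0,\dots,X_m]/J$ be a graded domain with weights $A_i > 0$, $A = \mathrm{lcm}(A_0,\dots,A_m)$, $a_i = A/A_i$, and $I = R_{\geq mA}$. Fix $p \geq 2$ and assume $I^{p-1} = R_{\geq (p-1)mA}$. Let $X_0^{c_0}\cdots X_m^{c_m}$ be a monomial of degree $\geq pmA$, fix $1 \leq n \leq m$ with $c_i \geq a_i$ for $0 \leq i < n$, and let $k_i$ be the positive integers with $k_i a_i \leq c_i < (k_i+1)a_i$ for $i < n$. If $k_0 + \cdots + k_{n-1} \geq m$, then $X_0^{c_0}\cdots X_m^{c_m} \in I^p$. -/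

import Mathlib

/-!
Choose `e ≤ K`, supported on `{i < n}`, with `∑ e i = m`. Since `a i * A i = L`, the monomial
`∏ X i ^ (e i * a i)` has degree exactly `m L`, so it lies in `I`; it divides the given monomial,
and the cofactor has degree at least `p m L - m L = (p - 1) m L`, so it lies in `I ^ (p - 1)`.
-/

open MvPolynomial Finset

theorem Finset.exists_le_sum_eq_of_le_sum {ι : Type*} [DecidableEq ι] {s : Finset ι}
    {f : ι → ℕ} {n : ℕ} (h : n ≤ ∑ i ∈ s, f i) :
    ∃ g ≤ f, (∀ i ∉ s, g i = 0) ∧ ∑ i ∈ s, g i = n := by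
  induction s using Finset.induction_on generalizing n with
  | empty => exact ⟨0, fun _ => Nat.zero_le _, fun _ _ => rfl, by rw [sum_empty] at h ⊢; omega⟩
  | @insert a s has ih =>
    rw [sum_insert has] at h
    obtain ⟨g, hgf, hg_out, hg_sum⟩ := ih (Nat.min_le_right n (∑ i ∈ s, f i))
    refine ⟨Function.update g a (n - min n (∑ i ∈ s, f i)), fun i => ?_, fun i hi => ?_, ?_⟩
    · rcases eq_or_ne i a with rfl | hia
      · simp only [Function.update_self]; omega
      · rw [Function.update_of_ne hia]; exact hgf i
    · rw [mem_insert, not_or] at hi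
      rw [Function.update_of_ne hi.1, hg_out i hi.2]
    · rw [sum_insert has, Function.update_self, sum_update_of_notMem has, hg_sum]
      omega

theorem Finset.sum_mul_div_mul_eq {ι : Type*} (s : Finset ι) (d A : ι → ℕ) {L : ℕ}
    (hA : ∀ i ∈ s, A i ∣ L) : ∑ i ∈ s, d i * (L / A i) * A i = (∑ i ∈ s, d i) * L := by
  rw [sum_mul]
  exact sum_congr rfl fun i hi => by rw [mul_assoc, Nat.div_mul_cancel (hA i hi)]

namespace MvPolynomial

variable {σ R : Type*} [CommSemiring R]

-- Its image in `k[X₀, …, X_m] ⧸ J` is the paper's `R_{≥ D}`.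
noncomputable def weightedDegreeGeIdeal (w : σ → ℕ) (D : ℕ) : Ideal (MvPolynomial σ R) :=
  Ideal.span {f | ∃ d : ℕ, D ≤ d ∧ IsWeightedHomogeneous w f d}

variable [Fintype σ] (w : σ → ℕ)

theorem isWeightedHomogeneous_prod_X_pow (b : σ → ℕ) :
    IsWeightedHomogeneous w (∏ i, X i ^ b i : MvPolynomial σ R) (∑ i, b i * w i) := by
  simpa only [smul_eq_mul] using
    IsWeightedHomogeneous.prod _ _ _ fun i _ => (isWeightedHomogeneous_X R w i).pow (b i)

theorem prod_X_pow_mem_weightedDegreeGeIdeal {b : σ → ℕ} {D : ℕ} (hD : D ≤ ∑ i, b i * w i) :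
    (∏ i, X i ^ b i : MvPolynomial σ R) ∈ weightedDegreeGeIdeal w D :=
  Ideal.subset_span ⟨_, hD, isWeightedHomogeneous_prod_X_pow w b⟩

theorem prod_X_pow_mem_weightedDegreeGeIdeal_mul {b c : σ → ℕ} {D E : ℕ} (hbc : ∀ i, b i ≤ c i)
    (hb : ∑ i, b i * w i = D) (hc : D + E ≤ ∑ i, c i * w i) :
    (∏ i, X i ^ c i : MvPolynomial σ R) ∈
      weightedDegreeGeIdeal w D * weightedDegreeGeIdeal w E := by
  have hfactor : (∏ i, X i ^ c i : MvPolynomial σ R) =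
      (∏ i, X i ^ b i) * ∏ i, X i ^ (c i - b i) := by
    rw [← prod_mul_distrib]
    exact prod_congr rfl fun i _ => by rw [← pow_add, Nat.add_sub_cancel' (hbc i)]
  have hcofactor : E ≤ ∑ i, (c i - b i) * w i := by
    simp_rw [Nat.sub_mul]
    rw [sum_tsub_distrib _ fun i _ => Nat.mul_le_mul_right _ (hbc i)]
    omega
  rw [hfactor]
  exact Ideal.mul_mem_mul (prod_X_pow_mem_weightedDegreeGeIdeal w hb.ge)
    (prod_X_pow_mem_weightedDegreeGeIdeal w hcofactor)

end MvPolynomial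

theorem stmt8_general (m : ℕ) (k : Type*) [CommRing k]
    (A : Fin (m + 1) → ℕ)
    (L : ℕ) (hL : L = Finset.univ.lcm A)
    (a : Fin (m + 1) → ℕ) (ha : ∀ i, a i = L / A i)
    (J : Ideal (MvPolynomial (Fin (m + 1)) k))
    (I : Ideal (MvPolynomial (Fin (m + 1)) k ⧸ J))
    (hI : I = Ideal.map (Ideal.Quotient.mk J)
      (Ideal.span {f | ∃ d : ℕ, m * L ≤ d ∧ IsWeightedHomogeneous A f d}))
    (p : ℕ) (hp : 2 ≤ p)
    (hIp : I ^ (p - 1) = Ideal.map (Ideal.Quotient.mk J)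
      (Ideal.span {f | ∃ d : ℕ, (p - 1) * m * L ≤ d ∧ IsWeightedHomogeneous A f d}))
    (c : Fin (m + 1) → ℕ)
    (hdeg : p * m * L ≤ ∑ i, c i * A i)
    (n : ℕ)
    (K : Fin (m + 1) → ℕ)
    (hK : ∀ i : Fin (m + 1), (i : ℕ) < n →
      1 ≤ K i ∧ K i * a i ≤ c i ∧ c i < (K i + 1) * a i)
    (hsum : m ≤ ∑ i ∈ Finset.univ.filter (fun i : Fin (m + 1) => (i : ℕ) < n), K i) :
    Ideal.Quotient.mk J (∏ i, X i ^ c i) ∈ I ^ p := by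
  classical
  obtain ⟨e, heK, he_out, he_sum⟩ := exists_le_sum_eq_of_le_sum hsum
  have hec : ∀ i, e i * a i ≤ c i := by
    intro i
    by_cases hi : (i : ℕ) < n
    · exact (Nat.mul_le_mul_right _ (heK i)).trans (hK i hi).2.1
    · simp [he_out i (by simpa using hi)]
  have he_deg : ∑ i, e i * a i * A i = m * L := by
    simp_rw [ha]
    rw [sum_mul_div_mul_eq _ _ _ fun i _ => hL ▸ dvd_lcm (mem_univ i),
      ← sum_subset (subset_univ _) fun i _ hi => he_out i hi, he_sum]
  have hIp_succ : I ^ p = I * I ^ (p - 1) := by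
    conv_lhs => rw [← Nat.sub_add_cancel (by omega : 1 ≤ p)]
    exact pow_succ' I (p - 1)
  have hdeg_split : m * L + (p - 1) * m * L ≤ ∑ i, c i * A i := by
    calc m * L + (p - 1) * m * L = (p - 1 + 1) * m * L := by ring
      _ = p * m * L := by rw [Nat.sub_add_cancel (by omega : 1 ≤ p)]
      _ ≤ _ := hdeg
  have hmem := prod_X_pow_mem_weightedDegreeGeIdeal_mul (R := k) A hec he_deg hdeg_split
  rw [hIp_succ, hIp, hI, ← Ideal.map_mul]
  exact Ideal.mem_map_of_mem _ hmem

theorem stmt8 (m : ℕ) (hm : 1 ≤ m) (k : Type*) [CommRing k] [IsDomain k]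
    (A : Fin (m + 1) → ℕ) (hApos : ∀ i, 0 < A i)
    (L : ℕ) (hL : L = Finset.univ.lcm A)
    (a : Fin (m + 1) → ℕ) (ha : ∀ i, a i = L / A i)
    (J : Ideal (MvPolynomial (Fin (m + 1)) k))
    (hJhom : ∀ f ∈ J, ∀ d : ℕ, weightedHomogeneousComponent A d f ∈ J)
    [IsDomain (MvPolynomial (Fin (m + 1)) k ⧸ J)]
    (I : Ideal (MvPolynomial (Fin (m + 1)) k ⧸ J))
    (hI : I = Ideal.map (Ideal.Quotient.mk J)
      (Ideal.span {f | ∃ d : ℕ, m * L ≤ d ∧ IsWeightedHomogeneous A f d}))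
    (p : ℕ) (hp : 2 ≤ p)
    (hIp : I ^ (p - 1) = Ideal.map (Ideal.Quotient.mk J)
      (Ideal.span {f | ∃ d : ℕ, (p - 1) * m * L ≤ d ∧ IsWeightedHomogeneous A f d}))
    (c : Fin (m + 1) → ℕ)
    (hdeg : p * m * L ≤ ∑ i, c i * A i)
    (n : ℕ) (hn1 : 1 ≤ n) (hnm : n ≤ m)
    (hca : ∀ i : Fin (m + 1), (i : ℕ) < n → a i ≤ c i)
    (K : Fin (m + 1) → ℕ)
    (hK : ∀ i : Fin (m + 1), (i : ℕ) < n →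
      1 ≤ K i ∧ K i * a i ≤ c i ∧ c i < (K i + 1) * a i)
    (hsum : m ≤ ∑ i ∈ Finset.univ.filter (fun i : Fin (m + 1) => (i : ℕ) < n), K i) :
    Ideal.Quotient.mk J (∏ i, X i ^ c i) ∈ I ^ p :=
  stmt8_general m k A L hL a ha J I hI p hp hIp c hdeg n K hK hsum
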